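/- arXiv:2603.19345 — 3 statements merged into one kernel-verified Lean document; each statement's English description precedes it below -/
import Mathlib

section
/- Let r ≥ 3 and k ≥ 2. If G is an r-uniform hypergraph and F₁, …, F_s ⊆ G are pairwise edge-disjoint subhypergraphs, and for a pair of distinct vertices u, v we choose m_i ∈ C_{F_i}(uv) for each i (where C_F(uv) is the set of nonnegative integers i such that there exist i distinct edges e₁,…,e_i of F with |{u,v} ∪ e₁ ∪ ⋯ ∪ e_i| ≤ (r−2)i + 2), then if ∑ m_i = k, the hypergraph G contains k edges spanning at most (r−2)k + 2 vertices. Contrapositively: if every k edges of G span more than (r−2)k+2 vertices, then k ∉ ∑ᵢ C_{F_i}(uv). -/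
/-- `ClaimSet r F u v` is the set `C_F(uv)` of nonnegative integers `i` such that there
exist `i` distinct edges `e₁,…,e_i` of `F` with `|{u,v} ∪ e₁ ∪ ⋯ ∪ e_i| ≤ (r−2)i + 2`. -/
def ClaimSet {V : Type*} [DecidableEq V] (r : ℕ) (F : Finset (Finset V)) (u v : V) :
    Set ℕ :=
  {i | ∃ S ⊆ F, S.card = i ∧ ({u, v} ∪ S.biUnion id).card ≤ (r - 2) * i + 2}

theorem stmt_1 {V : Type*} [DecidableEq V] (r k s : ℕ) (hr : 3 ≤ r) (hk : 2 ≤ k)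
    (G : Finset (Finset V)) (hedges : ∀ e ∈ G, e.card = r)
    (F : Fin s → Finset (Finset V)) (hF : ∀ i, F i ⊆ G)
    (hdisj : ∀ i j, i ≠ j → Disjoint (F i) (F j))
    (u v : V) (huv : u ≠ v)
    (m : Fin s → ℕ) (hm : ∀ i, m i ∈ ClaimSet r (F i) u v)
    (hsum : ∑ i, m i = k) :
    ∃ S ⊆ G, S.card = k ∧ (S.biUnion id).card ≤ (r - 2) * k + 2 := by
  choose T hT1 hT2 hT3 using hm
  have hcard2 : ({u, v} : Finset V).card = 2 := by
    rw [Finset.card_insert_of_notMem (by simp [huv]), Finset.card_singleton]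
  -- key per-index bound
  have hkey : ∀ i, (((T i).biUnion id) \ {u, v}).card ≤ (r - 2) * m i := by
    intro i
    have h := hT3 i
    have heq : ({u, v} ∪ (T i).biUnion id).card
        = 2 + (((T i).biUnion id) \ {u, v}).card := by
      rw [← Finset.union_sdiff_self_eq_union,
        Finset.card_union_of_disjoint Finset.disjoint_sdiff, hcard2]
    omega
  refine ⟨Finset.univ.biUnion T, ?_, ?_, ?_⟩
  · intro e he
    obtain ⟨i, _, hi⟩ := Finset.mem_biUnion.1 he
    exact hF i (hT1 i hi)
  · rw [Finset.card_biUnion]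
    · simp only [hT2]; exact hsum
    · intro i _ j _ hij
      exact (hdisj i j hij).mono (hT1 i) (hT1 j)
  · have hsub : (Finset.univ.biUnion T).biUnion id ⊆
        {u, v} ∪ Finset.univ.biUnion (fun i => ((T i).biUnion id) \ {u, v}) := by
      intro x hx
      obtain ⟨e, he, hxe⟩ := Finset.mem_biUnion.1 hx
      obtain ⟨i, _, hi⟩ := Finset.mem_biUnion.1 he
      by_cases hx2 : x ∈ ({u, v} : Finset V)
      · exact Finset.mem_union_left _ hx2
      · refine Finset.mem_union_right _ (Finset.mem_biUnion.2 ⟨i, Finset.mem_univ _, ?_⟩)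
        exact Finset.mem_sdiff.2 ⟨Finset.mem_biUnion.2 ⟨e, hi, hxe⟩, hx2⟩
    calc ((Finset.univ.biUnion T).biUnion id).card
        ≤ ({u, v} ∪ Finset.univ.biUnion (fun i => ((T i).biUnion id) \ {u, v})).card :=
          Finset.card_le_card hsub
      _ ≤ ({u, v} : Finset V).card
          + (Finset.univ.biUnion (fun i => ((T i).biUnion id) \ {u, v})).card :=
          Finset.card_union_le _ _
      _ ≤ 2 + ∑ i, (((T i).biUnion id) \ {u, v}).card := by
          rw [hcard2]; exact Nat.add_le_add_left (Finset.card_biUnion_le) _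
      _ ≤ 2 + ∑ i, (r - 2) * m i := by
          exact Nat.add_le_add_left (Finset.sum_le_sum fun i _ => hkey i) _
      _ = (r - 2) * k + 2 := by rw [← Finset.mul_sum, hsum]; omega
end

section
/- Let k ≥ 4 be even and r ≥ 3 an integer. Let m ≥ 1 and e₁, …, e_m ≥ 1 be integers, and set |F| = ∑ᵢ eᵢ. Suppose |F|·(2r² − 8r + 10 − k) ≥ m·(2r² − 8r + 12 − k) − 2. Then the quantity ∑ᵢ (eᵢ·C(r,2) − eᵢ + 1) + (2/(k−2))·(1 − m + ∑ᵢ (eᵢ−1)(r−2)²) is at least C(r,2)·∑ᵢ eᵢ. -/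
theorem stmt_4 (k r m : ℕ) (hk : 4 ≤ k) (hke : Even k) (hr : 3 ≤ r) (hm : 1 ≤ m)
    (e : Fin m → ℕ) (he : ∀ i, 1 ≤ e i)
    (hmain : ((m : ℝ)) * (2 * (r : ℝ) ^ 2 - 8 * r + 12 - k) - 2
      ≤ ((∑ i, (e i : ℝ))) * (2 * (r : ℝ) ^ 2 - 8 * r + 10 - k)) :
    (r.choose 2 : ℝ) * (∑ i, (e i : ℝ))
      ≤ (∑ i, ((e i : ℝ) * (r.choose 2 : ℝ) - e i + 1))
        + (2 / ((k : ℝ) - 2)) * (1 - m + ∑ i, ((e i : ℝ) - 1) * ((r : ℝ) - 2) ^ 2) := by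
  set S : ℝ := ∑ i, (e i : ℝ) with hS
  set C : ℝ := (r.choose 2 : ℝ)
  have hk2 : (2:ℝ) ≤ (k:ℝ) - 2 := by
    have : (4:ℝ) ≤ (k:ℝ) := by exact_mod_cast hk
    linarith
  have hkpos : (0:ℝ) < (k:ℝ) - 2 := by linarith
  have h1 : (∑ i, ((e i : ℝ) * C - e i + 1)) = S * C - S + m := by
    simp [Finset.sum_add_distrib, Finset.sum_sub_distrib, ← Finset.sum_mul, hS]
  have h2 : (∑ i, ((e i : ℝ) - 1) * ((r : ℝ) - 2) ^ 2) = (S - m) * ((r:ℝ) - 2) ^ 2 := by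
    rw [← Finset.sum_mul, Finset.sum_sub_distrib]
    simp [hS]
  rw [h1, h2]
  have key : ((k:ℝ) - 2) * ((m:ℝ) - S) + 2 * (1 - m + (S - m) * ((r:ℝ) - 2) ^ 2) ≥ 0 := by
    nlinarith [hmain]
  have hdiv : (S - (m:ℝ)) ≤ (2 * (1 - m + (S - m) * ((r:ℝ) - 2) ^ 2)) / ((k:ℝ) - 2) := by
    rw [le_div_iff₀ hkpos]
    nlinarith [key]
  have : (2 / ((k : ℝ) - 2)) * (1 - m + (S - m) * ((r:ℝ) - 2) ^ 2)
      = (2 * (1 - m + (S - m) * ((r:ℝ) - 2) ^ 2)) / ((k:ℝ) - 2) := by ring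
  rw [this]
  linarith
end

section
/- Let r ≥ 3, k ≥ 2, and let G be an r-uniform hypergraph in which every ℓ edges, for every 2 ≤ ℓ ≤ k−1, span more than (r−2)ℓ + 1 vertices. Let M ⊆ G be connected (any two edges joined by a chain with consecutive intersections of size ≥ 2) with |M| = a ≤ k−1. Then |V(M)| = (r−2)a + 2. -/
/-- A finite `r`-graph `M` is connected if any two edges are joined by a chain of
edges of `M` with consecutive intersections of size at least 2. -/
def HyperConnected {V : Type*} [DecidableEq V] (M : Finset (Finset V)) : Prop :=
  ∀ X ∈ M, ∀ Y ∈ M,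
    Relation.ReflTransGen (fun A B => A ∈ M ∧ B ∈ M ∧ 2 ≤ (A ∩ B).card) X Y

lemma cross_lemma {α : Type*} [DecidableEq α] {rel : α → α → Prop} {T : Finset α} {X Y : α}
    (h : Relation.ReflTransGen rel X Y) (hX : X ∈ T) (hY : Y ∉ T) :
    ∃ A B, A ∈ T ∧ B ∉ T ∧ rel A B := by
  induction h with
  | refl => exact absurd hX hY
  | @tail b c h' step ih =>
    by_cases hb : b ∈ T
    · exact ⟨b, c, hb, hY, step⟩
    · exact ih hb

lemma upper_bound {V : Type*} [DecidableEq V] (r : ℕ) (hr : 2 ≤ r)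
    (M : Finset (Finset V)) (hedges : ∀ e ∈ M, e.card = r)
    (hMne : M.Nonempty) (hconn : HyperConnected M) :
    (M.biUnion id).card ≤ (r - 2) * M.card + 2 := by
  classical
  set m := r - 2 with hm
  have hrm : r = m + 2 := by omega
  set S : Finset (Finset (Finset V)) :=
    M.powerset.filter (fun T => T.Nonempty ∧ (T.biUnion id).card ≤ m * T.card + 2) with hS
  obtain ⟨e, he⟩ := hMne
  have hsing : ({e} : Finset (Finset V)) ∈ S := by
    simp only [hS, Finset.mem_filter, Finset.mem_powerset]
    refine ⟨Finset.singleton_subset_iff.mpr he, Finset.singleton_nonempty e, ?_⟩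
    simp [hedges e he, hrm]
  obtain ⟨T, hTS, hTmax⟩ := Finset.exists_max_image S Finset.card ⟨_, hsing⟩
  simp only [hS, Finset.mem_filter, Finset.mem_powerset] at hTS
  obtain ⟨hTM, hTne, hTcard⟩ := hTS
  -- claim T = M
  have hTeq : T = M := by
    by_contra hne
    obtain ⟨Y, hYM, hYT⟩ : ∃ Y ∈ M, Y ∉ T := by
      by_contra hc
      push_neg at hc
      exact hne (Finset.Subset.antisymm hTM hc)
    obtain ⟨X, hXT⟩ := hTne
    have hpath := hconn X (hTM hXT) Y hYM
    obtain ⟨A, B, hAT, hBT, hAM, hBM, hAB⟩ := cross_lemma hpath hXT hYT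
    -- insert B into T
    have hins : insert B T ∈ S := by
      simp only [hS, Finset.mem_filter, Finset.mem_powerset]
      refine ⟨Finset.insert_subset hBM hTM, Finset.insert_nonempty _ _, ?_⟩
      have hsub : (insert B T).biUnion id ⊆ (B \ A) ∪ T.biUnion id := by
        intro v hv
        simp only [Finset.biUnion_insert, Finset.mem_union, id] at hv ⊢
        rcases hv with hv | hv
        · by_cases hvA : v ∈ A
          · exact Or.inr (Finset.mem_biUnion.mpr ⟨A, hAT, hvA⟩)
          · exact Or.inl (Finset.mem_sdiff.mpr ⟨hv, hvA⟩)
        · exact Or.inr hv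
      have h1 : ((insert B T).biUnion id).card ≤ (B \ A).card + (T.biUnion id).card :=
        le_trans (Finset.card_le_card hsub) (Finset.card_union_le _ _)
      have h2 : (B \ A).card + (B ∩ A).card = B.card := Finset.card_sdiff_add_card_inter _ _
      have h3 : 2 ≤ (B ∩ A).card := by
        rwa [Finset.inter_comm] at hAB
      have h4 : (B \ A).card ≤ m := by
        have := hedges B hBM
        omega
      have h5 : (insert B T).card = T.card + 1 := Finset.card_insert_of_notMem hBT
      calc ((insert B T).biUnion id).card ≤ m + (m * T.card + 2) := by omega
        _ = m * (insert B T).card + 2 := by rw [h5]; ring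
    have := hTmax _ hins
    rw [Finset.card_insert_of_notMem hBT] at this
    omega
  rw [← hTeq]
  exact hTcard

theorem stmt_5 {V : Type*} [DecidableEq V] (r k a : ℕ) (hr : 3 ≤ r) (hk : 2 ≤ k)
    (G : Finset (Finset V)) (hedges : ∀ e ∈ G, e.card = r)
    (hfree : ∀ ℓ, 2 ≤ ℓ → ℓ ≤ k - 1 →
      ∀ S ⊆ G, S.card = ℓ → (r - 2) * ℓ + 1 < (S.biUnion id).card)
    (M : Finset (Finset V)) (hMG : M ⊆ G) (hMne : M.Nonempty)
    (hconn : HyperConnected M) (ha : M.card = a) (hak : a ≤ k - 1) :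
    (M.biUnion id).card = (r - 2) * a + 2 := by
  have hub : (M.biUnion id).card ≤ (r - 2) * a + 2 := by
    rw [← ha]
    exact upper_bound r (by omega) M (fun e he => hedges e (hMG he)) hMne hconn
  have hapos : 1 ≤ a := by
    rw [← ha]
    exact Finset.card_pos.mpr hMne
  rcases eq_or_lt_of_le hapos with h1 | h2
  · -- a = 1
    obtain ⟨e, he⟩ := Finset.card_eq_one.mp (ha.trans h1.symm)
    subst he
    simp only [Finset.singleton_biUnion, id]
    rw [hedges e (hMG (Finset.mem_singleton_self e)), ← h1]
    omega
  · -- a ≥ 2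
    have hlb := hfree a h2 hak M hMG ha
    omega
end
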